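/- arXiv:2602.05893 — 6 statements merged into one kernel-verified Lean document; each statement's English description precedes it below -/
import Mathlib

section
/- Let x ∈ ℝ^n be non-Pareto-critical, let λ* minimize ‖Σλ_j ∇f_j(x)‖₂² over the simplex, and set g := Σλ*_j ∇f_j(x) ≠ 0. Then the normalized negative direction n := -g/‖g‖₂ is an optimal solution of min_{‖d‖₂ ≤ 1} max_j ∇f_j(x)ᵀ d, with optimal value -‖g‖₂. -/
/-!
The minimal-norm point `g` of the convex hull of the gradients satisfies the variational
inequality `‖g‖² ≤ ⟪g, ∇f_j(x)⟫` for every `j`, so `-g/‖g‖` makes every directional derivative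
at most `-‖g‖`. Conversely, for `‖d‖ ≤ 1` the largest directional derivative dominates the
`λ*`-weighted average `⟪g, d⟫ ≥ -‖g‖`; taking `d = -g/‖g‖` shows that the bound is attained.
-/

open Finset RealInnerProductSpace

section MinimalNorm

variable {F : Type*} [NormedAddCommGroup F] [InnerProductSpace ℝ F]

theorem Convex.norm_sq_le_real_inner_of_isMinOn_norm {K : Set F} (hK : Convex ℝ K) {v w : F}
    (hv : v ∈ K) (hmin : IsMinOn (‖·‖) K v) (hw : w ∈ K) : ‖v‖ ^ 2 ≤ ⟪v, w⟫ := by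
  have : Nonempty K := ⟨⟨v, hv⟩⟩
  have hinf : ‖0 - v‖ = ⨅ u : K, ‖0 - (u : F)‖ := by
    simp only [zero_sub, norm_neg]
    exact le_antisymm (le_ciInf fun u => hmin u.2)
      (ciInf_le ⟨0, Set.forall_mem_range.2 fun u => norm_nonneg _⟩ (⟨v, hv⟩ : K))
  have hproj := (norm_eq_iInf_iff_real_inner_le_zero hK hv).1 hinf w hw
  rw [zero_sub, inner_neg_left, inner_sub_right, real_inner_self_eq_norm_sq] at hproj
  linarith

variable {ι : Type*} [Fintype ι]

theorem norm_sq_le_real_inner_of_isMinOn_stdSimplex (G : ι → F) {lam : ι → ℝ}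
    (hlam : lam ∈ stdSimplex ℝ ι)
    (hmin : IsMinOn (fun mu : ι → ℝ => ‖∑ j, mu j • G j‖) (stdSimplex ℝ ι) lam) (j : ι) :
    ‖∑ i, lam i • G i‖ ^ 2 ≤ ⟪∑ i, lam i • G i, G j⟫ := by
  classical
  have hK : Convex ℝ ((fun mu : ι → ℝ => ∑ i, mu i • G i) '' stdSimplex ℝ ι) :=
    (convex_stdSimplex ℝ ι).linear_image (Fintype.linearCombination ℝ G)
  refine hK.norm_sq_le_real_inner_of_isMinOn_norm ⟨lam, hlam, rfl⟩ ?_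
    ⟨Pi.single j 1, single_mem_stdSimplex ℝ j, by simp [Pi.single_apply]⟩
  rintro _ ⟨mu, hmu, rfl⟩
  exact hmin hmu

theorem sum_mul_le_sup'_of_mem_stdSimplex {lam : ι → ℝ} (hlam : lam ∈ stdSimplex ℝ ι)
    (hne : (univ : Finset ι).Nonempty) (a : ι → ℝ) :
    ∑ j, lam j * a j ≤ univ.sup' hne a := by
  have hsum : ∑ j, lam j = 1 := hlam.2
  have := centerMass_le_sup (s := univ) (f := a) (fun j _ => hlam.1 j)
    (by rw [hsum]; exact one_pos)
  rwa [centerMass_eq_of_sum_1 _ _ hsum] at this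

theorem neg_norm_le_sup'_real_inner {G : ι → F} {lam : ι → ℝ} (hlam : lam ∈ stdSimplex ℝ ι)
    (hne : (univ : Finset ι).Nonempty) {d : F} (hd : ‖d‖ ≤ 1) :
    -‖∑ j, lam j • G j‖ ≤ univ.sup' hne (fun j => ⟪G j, d⟫) := by
  set g := ∑ j, lam j • G j
  calc -‖g‖ ≤ -(‖g‖ * ‖d‖) := by nlinarith [norm_nonneg g]
    _ ≤ ⟪g, d⟫ := neg_le_of_abs_le (abs_real_inner_le_norm g d)
    _ = ∑ j, lam j * ⟪G j, d⟫ := by simp only [g, sum_inner, real_inner_smul_left]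
    _ ≤ _ := sum_mul_le_sup'_of_mem_stdSimplex hlam hne _

theorem sup'_real_inner_neg_normalize_le {G : ι → F} {g : F} (hne : (univ : Finset ι).Nonempty)
    (hg : ∀ j, ‖g‖ ^ 2 ≤ ⟪g, G j⟫) :
    univ.sup' hne (fun j => ⟪G j, -(‖g‖⁻¹ • g)⟫) ≤ -‖g‖ := by
  refine sup'_le _ _ fun j _ => ?_
  rw [inner_neg_right, real_inner_smul_right, real_inner_comm, neg_le_neg_iff]
  calc ‖g‖ = ‖g‖⁻¹ * ‖g‖ ^ 2 := by
        rcases eq_or_ne ‖g‖ 0 with h | h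
        · simp [h]
        · field_simp
    _ ≤ ‖g‖⁻¹ * ⟪g, G j⟫ := by gcongr; exact hg j

end MinimalNorm

theorem stmt4_general {n m : ℕ} (hm : 0 < m)
    (G : Fin m → EuclideanSpace ℝ (Fin n))
    (lam : Fin m → ℝ) (hpos : ∀ j, 0 ≤ lam j) (hsum : ∑ j, lam j = 1)
    (hminim : ∀ mu : Fin m → ℝ, (∀ j, 0 ≤ mu j) → ∑ j, mu j = 1 →
      ‖∑ j, lam j • G j‖ ^ 2 ≤ ‖∑ j, mu j • G j‖ ^ 2)
    (g : EuclideanSpace ℝ (Fin n)) (hg : g = ∑ j, lam j • G j) :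
    ‖-(‖g‖⁻¹ • g)‖ ≤ 1 ∧
    Finset.univ.sup' ⟨⟨0, hm⟩, Finset.mem_univ _⟩
      (fun j => (inner ℝ (G j) (-(‖g‖⁻¹ • g)) : ℝ)) = -‖g‖ ∧
    ∀ d : EuclideanSpace ℝ (Fin n), ‖d‖ ≤ 1 →
      -‖g‖ ≤ Finset.univ.sup' ⟨⟨0, hm⟩, Finset.mem_univ _⟩
        (fun j => (inner ℝ (G j) d : ℝ)) := by
  have hlam : lam ∈ stdSimplex ℝ (Fin m) := ⟨hpos, hsum⟩
  have hmin : IsMinOn (fun mu : Fin m → ℝ => ‖∑ j, mu j • G j‖) (stdSimplex ℝ (Fin m)) lam :=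
    fun mu hmu => (pow_le_pow_iff_left₀ (norm_nonneg _) (norm_nonneg _) two_ne_zero).1
      (hminim mu hmu.1 hmu.2)
  subst hg
  have hunit : ‖-(‖∑ j, lam j • G j‖⁻¹ • ∑ j, lam j • G j)‖ ≤ 1 := by
    rw [norm_neg, norm_smul, norm_inv, norm_norm]
    exact inv_mul_le_one_of_le₀ le_rfl (norm_nonneg _)
  have hlower := fun d (hd : ‖d‖ ≤ 1) => neg_norm_le_sup'_real_inner (G := G) hlam
    ⟨⟨0, hm⟩, mem_univ _⟩ hd
  exact ⟨hunit, le_antisymm (sup'_real_inner_neg_normalize_le _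
    (norm_sq_le_real_inner_of_isMinOn_stdSimplex G hlam hmin)) (hlower _ hunit), hlower⟩

/-- if `x` is not Pareto critical, `λ*` minimizes `‖Σ λ_j ∇f_j(x)‖²` over the
simplex and `g = Σ λ*_j ∇f_j(x) ≠ 0`, then `n = -g/‖g‖` is optimal for
`min_{‖d‖ ≤ 1} max_j ∇f_j(x)ᵀ d`, with optimal value `-‖g‖`. -/
theorem stmt4 {n m : ℕ} (hm : 0 < m) (f : Fin m → EuclideanSpace ℝ (Fin n) → ℝ)
    (G : Fin m → EuclideanSpace ℝ (Fin n)) (x : EuclideanSpace ℝ (Fin n))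
    (hgrad : ∀ j, HasGradientAt (f j) (G j) x)
    (lam : Fin m → ℝ) (hpos : ∀ j, 0 ≤ lam j) (hsum : ∑ j, lam j = 1)
    (hminim : ∀ mu : Fin m → ℝ, (∀ j, 0 ≤ mu j) → ∑ j, mu j = 1 →
      ‖∑ j, lam j • G j‖ ^ 2 ≤ ‖∑ j, mu j • G j‖ ^ 2)
    (g : EuclideanSpace ℝ (Fin n)) (hg : g = ∑ j, lam j • G j) (hgne : g ≠ 0) :
    ‖-(‖g‖⁻¹ • g)‖ ≤ 1 ∧
    Finset.univ.sup' ⟨⟨0, hm⟩, Finset.mem_univ _⟩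
      (fun j => (inner ℝ (G j) (-(‖g‖⁻¹ • g)) : ℝ)) = -‖g‖ ∧
    ∀ d : EuclideanSpace ℝ (Fin n), ‖d‖ ≤ 1 →
      -‖g‖ ≤ Finset.univ.sup' ⟨⟨0, hm⟩, Finset.mem_univ _⟩
        (fun j => (inner ℝ (G j) d : ℝ)) :=
  stmt4_general hm G lam hpos hsum hminim g hg
end

section
/- Let g be the minimal-norm element of the convex hull of the gradients ∇f_1(x),...,∇f_m(x). Then ‖g‖₂² = - max_{j ∈ {1,...,m}} ∇f_j(x)ᵀ(-g); equivalently, max_j ∇f_j(x)ᵀ(-g) = -‖g‖₂². -/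
/-!
By the projection characterization of the minimal-norm point `g` of the convex hull `K` of the
gradients, `‖g‖² ≤ ⟪w, g⟫` for every `w ∈ K`; in particular `⟪∇f_j(x), -g⟫ ≤ -‖g‖²` for each `j`.
Conversely `-‖g‖² = ⟪g, -g⟫ = ∑ λ_j ⟪∇f_j(x), -g⟫` is a convex combination of these values, so it
is at most their maximum.
-/

open Finset

theorem IsMinOn.sq_norm_le_real_inner {E : Type*} [NormedAddCommGroup E] [InnerProductSpace ℝ E]
    {K : Set E} (hK : Convex ℝ K) {v : E} (hv : v ∈ K)
    (hmin : IsMinOn (fun w => ‖w‖ ^ 2) K v) {w : E} (hw : w ∈ K) :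
    ‖v‖ ^ 2 ≤ inner ℝ w v := by
  have : Nonempty K := ⟨⟨v, hv⟩⟩
  have hinf : ‖0 - v‖ = ⨅ u : K, ‖0 - (u : E)‖ := by
    simp only [zero_sub, norm_neg]
    refine le_antisymm (le_ciInf fun u => ?_) (ciInf_le ⟨0, ?_⟩ (⟨v, hv⟩ : K))
    · exact (pow_le_pow_iff_left₀ (norm_nonneg _) (norm_nonneg _) two_ne_zero).1
        (isMinOn_iff.1 hmin u u.2)
    · rintro _ ⟨u, rfl⟩
      positivity
  have hproj := (norm_eq_iInf_iff_real_inner_le_zero hK hv).1 hinf w hw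
  rw [zero_sub, inner_neg_left, inner_sub_right, real_inner_self_eq_norm_sq,
    real_inner_comm] at hproj
  linarith

theorem Finset.sum_mul_le_sup' {ι R : Type*} [Semiring R] [LinearOrder R] [IsOrderedRing R]
    {s : Finset ι} (hs : s.Nonempty) {w a : ι → R} (hw₀ : ∀ i ∈ s, 0 ≤ w i)
    (hw₁ : ∑ i ∈ s, w i = 1) :
    ∑ i ∈ s, w i * a i ≤ s.sup' hs a :=
  calc ∑ i ∈ s, w i * a i ≤ ∑ i ∈ s, w i * s.sup' hs a :=
        sum_le_sum fun i hi => mul_le_mul_of_nonneg_left (le_sup' a hi) (hw₀ i hi)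
    _ = s.sup' hs a := by rw [← sum_mul, hw₁, one_mul]

theorem stmt7_general {n m : ℕ} (hm : 0 < m)
    (G : Fin m → EuclideanSpace ℝ (Fin n))
    (lam : Fin m → ℝ) (hpos : ∀ j, 0 ≤ lam j) (hsum : ∑ j, lam j = 1)
    (hminim : ∀ mu : Fin m → ℝ, (∀ j, 0 ≤ mu j) → ∑ j, mu j = 1 →
      ‖∑ j, lam j • G j‖ ^ 2 ≤ ‖∑ j, mu j • G j‖ ^ 2)
    (g : EuclideanSpace ℝ (Fin n)) (hg : g = ∑ j, lam j • G j) :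
    Finset.univ.sup' ⟨⟨0, hm⟩, Finset.mem_univ _⟩
      (fun j => (inner ℝ (G j) (-g) : ℝ)) = -‖g‖ ^ 2 := by
  set L := Fintype.linearCombination ℝ G
  have hL : ∀ mu, L mu = ∑ j, mu j • G j := Fintype.linearCombination_apply ℝ G
  have hgK : g ∈ L '' stdSimplex ℝ (Fin m) := ⟨lam, ⟨hpos, hsum⟩, by rw [hL, hg]⟩
  have hmin : IsMinOn (fun w => ‖w‖ ^ 2) (L '' stdSimplex ℝ (Fin m)) g := by
    rintro _ ⟨mu, ⟨hmu₀, hmu₁⟩, rfl⟩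
    simpa only [Set.mem_ofPred_eq, hL, hg] using hminim mu hmu₀ hmu₁
  have hvertex : ∀ j, inner ℝ (G j) (-g) ≤ -‖g‖ ^ 2 := fun j => by
    have hGj : G j ∈ L '' stdSimplex ℝ (Fin m) :=
      ⟨Pi.single j 1, single_mem_stdSimplex ℝ j, by simp [L]⟩
    rw [inner_neg_right, neg_le_neg_iff]
    exact hmin.sq_norm_le_real_inner ((convex_stdSimplex ℝ _).linear_image L) hgK hGj
  refine le_antisymm (sup'_le _ _ fun j _ => hvertex j) ?_
  calc -‖g‖ ^ 2 = ∑ j, lam j * inner ℝ (G j) (-g) := by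
        rw [← real_inner_self_eq_norm_sq, ← inner_neg_right]
        nth_rw 1 [hg]
        simp only [sum_inner, real_inner_smul_left]
    _ ≤ _ := sum_mul_le_sup' _ (fun j _ => hpos j) hsum

/-- with `g` the minimal-norm element of the convex hull of the gradients,
`max_j ∇f_j(x)ᵀ(-g) = -‖g‖²`. -/
theorem stmt7 {n m : ℕ} (hm : 0 < m) (f : Fin m → EuclideanSpace ℝ (Fin n) → ℝ)
    (G : Fin m → EuclideanSpace ℝ (Fin n)) (x : EuclideanSpace ℝ (Fin n))
    (hgrad : ∀ j, HasGradientAt (f j) (G j) x)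
    (lam : Fin m → ℝ) (hpos : ∀ j, 0 ≤ lam j) (hsum : ∑ j, lam j = 1)
    (hminim : ∀ mu : Fin m → ℝ, (∀ j, 0 ≤ mu j) → ∑ j, mu j = 1 →
      ‖∑ j, lam j • G j‖ ^ 2 ≤ ‖∑ j, mu j • G j‖ ^ 2)
    (g : EuclideanSpace ℝ (Fin n)) (hg : g = ∑ j, lam j • G j) :
    Finset.univ.sup' ⟨⟨0, hm⟩, Finset.mem_univ _⟩
      (fun j => (inner ℝ (G j) (-g) : ℝ)) = -‖g‖ ^ 2 :=
  stmt7_general hm G lam hpos hsum hminim g hg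
end

section
/- The optimal value of min_{‖d‖₂ ≤ 1} max_j ∇f_j(x)ᵀ d is always nonpositive, and it equals zero if and only if x is Pareto critical. -/
/-!
Since `⟪·, d⟫` is linear, `max_j ⟪G j, d⟫` bounds `⟪y, d⟫` on the convex hull of the gradients,
so when `0` lies in the hull (Pareto criticality) no direction has negative value, while `d = 0`
has value `0`. Conversely, if `0` is not in the compact hull, its point `p` of minimal norm
satisfies `⟪p, y⟫ ≥ ‖p‖² > 0` on the hull, so `d = -p / ‖p‖` has negative value.
-/

open Finset Set
open scoped InnerProductSpace

lemma mem_convexHull_range_iff_exists_weights {R E ι : Type*} [Field R] [LinearOrder R]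
    [IsStrictOrderedRing R] [AddCommGroup E] [Module R E] [Fintype ι] (v : ι → E) (x : E) :
    x ∈ convexHull R (range v) ↔
      ∃ w : ι → R, (∀ i, 0 ≤ w i) ∧ ∑ i, w i = 1 ∧ ∑ i, w i • v i = x := by
  classical
  constructor
  · rw [convexHull_range_eq_exists_affineCombination]
    rintro ⟨s, w, hw₀, hw₁, rfl⟩
    have hw₁' : ∑ i, (s : Set ι).indicator w i = 1 := by
      rwa [sum_indicator_subset _ s.subset_univ]
    refine ⟨(s : Set ι).indicator w, fun i => ?_, hw₁', ?_⟩
    · by_cases hi : i ∈ s <;> simp [hi, hw₀]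
    · rw [affineCombination_indicator_subset _ _ s.subset_univ,
        affineCombination_eq_linear_combination _ _ _ hw₁']
  · rintro ⟨w, hw₀, hw₁, hx⟩
    exact mem_convexHull_of_exists_fintype w v hw₀ hw₁ (mem_range_self ·) hx

section InnerProductSpace

variable {E : Type*} [NormedAddCommGroup E] [InnerProductSpace ℝ E]

/-- Witnessed by the point of `K` of minimal norm, i.e. the projection of `0` onto `K`. -/
lemma exists_mem_forall_norm_sq_le_inner {K : Set E} (hne : K.Nonempty) (hc : IsComplete K)
    (hK : Convex ℝ K) : ∃ p ∈ K, ∀ y ∈ K, ‖p‖ ^ 2 ≤ ⟪p, y⟫_ℝ := by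
  obtain ⟨p, hp, hmin⟩ := exists_norm_eq_iInf_of_complete_convex hne hc hK 0
  refine ⟨p, hp, fun y hy => ?_⟩
  have hproj := (norm_eq_iInf_iff_real_inner_le_zero hK hp).1 hmin y hy
  rw [zero_sub, inner_neg_left, inner_sub_right, real_inner_self_eq_norm_sq] at hproj
  linarith

variable {ι : Type*} {s : Finset ι} (hs : s.Nonempty) (G : ι → E)

lemma inner_le_sup'_of_mem_convexHull {y : E} (hy : y ∈ convexHull ℝ (G '' s)) (d : E) :
    ⟪y, d⟫_ℝ ≤ s.sup' hs fun j => ⟪G j, d⟫_ℝ := by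
  have hhalf : Convex ℝ {z : E | ⟪z, d⟫_ℝ ≤ s.sup' hs fun j => ⟪G j, d⟫_ℝ} :=
    convex_halfSpace_le (f := (⟪·, d⟫_ℝ))
      ⟨(inner_add_left · · d), fun c z => real_inner_smul_left z d c⟩ _
  refine convexHull_min ?_ hhalf hy
  rintro _ ⟨j, hj, rfl⟩
  exact le_sup' (fun j => ⟪G j, d⟫_ℝ) hj

lemma exists_norm_le_one_sup'_inner_neg (h0 : (0 : E) ∉ convexHull ℝ (G '' s)) :
    ∃ d : E, ‖d‖ ≤ 1 ∧ (s.sup' hs fun j => ⟪G j, d⟫_ℝ) < 0 := by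
  have hK : IsCompact (convexHull ℝ (G '' s)) := (s.finite_toSet.image G).isCompact_convexHull ℝ
  obtain ⟨p, hp, hpK⟩ := exists_mem_forall_norm_sq_le_inner
    ((hs.to_set.image G).mono (subset_convexHull ℝ _)) hK.isComplete (convex_convexHull ℝ _)
  have hp0 : 0 < ‖p‖ := norm_pos_iff.2 (ne_of_mem_of_not_mem hp h0)
  refine ⟨-‖p‖⁻¹ • p, by simp [norm_smul, hp0.ne'], (sup'_lt_iff hs).2 fun j hj => ?_⟩
  have hGj := hpK (G j) (subset_convexHull ℝ _ (mem_image_of_mem G hj))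
  rw [real_inner_smul_right, real_inner_comm, neg_mul, neg_lt_zero]
  exact mul_pos (inv_pos.2 hp0) ((pow_pos hp0 2).trans_le hGj)

lemma zero_mem_convexHull_iff_forall_sup'_inner_nonneg :
    (0 : E) ∈ convexHull ℝ (G '' s) ↔ ∀ d : E, ‖d‖ ≤ 1 → 0 ≤ s.sup' hs fun j => ⟪G j, d⟫_ℝ := by
  refine ⟨fun h0 d _ => ?_, fun h => ?_⟩
  · simpa using inner_le_sup'_of_mem_convexHull hs G h0 d
  · by_contra h0
    obtain ⟨d, hd, hneg⟩ := exists_norm_le_one_sup'_inner_neg hs G h0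
    exact (h d hd).not_gt hneg

end InnerProductSpace

theorem stmt9_general {n m : ℕ} (hm : 0 < m)
    (G : Fin m → EuclideanSpace ℝ (Fin n)) :
    sInf {r : ℝ | ∃ d : EuclideanSpace ℝ (Fin n), ‖d‖ ≤ 1 ∧
        r = Finset.univ.sup' ⟨⟨0, hm⟩, Finset.mem_univ _⟩
          (fun j => (inner ℝ (G j) d : ℝ))} ≤ 0 ∧
    (sInf {r : ℝ | ∃ d : EuclideanSpace ℝ (Fin n), ‖d‖ ≤ 1 ∧
        r = Finset.univ.sup' ⟨⟨0, hm⟩, Finset.mem_univ _⟩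
          (fun j => (inner ℝ (G j) d : ℝ))} = 0 ↔
      ∃ lam : Fin m → ℝ, (∀ j, 0 ≤ lam j) ∧ ∑ j, lam j = 1 ∧ ∑ j, lam j • G j = 0) := by
  set j₀ : Fin m := ⟨0, hm⟩
  set S := {r : ℝ | ∃ d : EuclideanSpace ℝ (Fin n), ‖d‖ ≤ 1 ∧
    r = univ.sup' ⟨j₀, mem_univ _⟩ fun j => ⟪G j, d⟫_ℝ}
  have hzero : (0 : ℝ) ∈ S :=
    ⟨0, by simp, by simp only [inner_zero_right]; exact (sup'_const _ _).symm⟩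
  have hbdd : BddBelow S := by
    refine ⟨-‖G j₀‖, ?_⟩
    rintro _ ⟨d, hd, rfl⟩
    calc -‖G j₀‖ ≤ -(‖G j₀‖ * ‖d‖) := neg_le_neg (mul_le_of_le_one_right (norm_nonneg _) hd)
      _ ≤ ⟪G j₀, d⟫_ℝ := neg_le_of_abs_le (abs_real_inner_le_norm _ _)
      _ ≤ _ := le_sup' (fun j => ⟪G j, d⟫_ℝ) (mem_univ j₀)
  refine ⟨csInf_le hbdd hzero, ?_⟩
  rw [← mem_convexHull_range_iff_exists_weights, ← image_univ, ← coe_univ,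
    zero_mem_convexHull_iff_forall_sup'_inner_nonneg]
  refine ⟨fun hinf d hd => hinf ▸ csInf_le hbdd ⟨d, hd, rfl⟩, fun h => ?_⟩
  refine le_antisymm (csInf_le hbdd hzero) (le_csInf ⟨0, hzero⟩ ?_)
  rintro _ ⟨d, hd, rfl⟩
  exact h d hd

/-- the optimal value of `min_{‖d‖ ≤ 1} max_j ∇f_j(x)ᵀ d` is nonpositive,
and is zero iff `x` is Pareto critical. -/
theorem stmt9 {n m : ℕ} (hm : 0 < m) (f : Fin m → EuclideanSpace ℝ (Fin n) → ℝ)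
    (G : Fin m → EuclideanSpace ℝ (Fin n)) (x : EuclideanSpace ℝ (Fin n))
    (hgrad : ∀ j, HasGradientAt (f j) (G j) x) :
    sInf {r : ℝ | ∃ d : EuclideanSpace ℝ (Fin n), ‖d‖ ≤ 1 ∧
        r = Finset.univ.sup' ⟨⟨0, hm⟩, Finset.mem_univ _⟩
          (fun j => (inner ℝ (G j) d : ℝ))} ≤ 0 ∧
    (sInf {r : ℝ | ∃ d : EuclideanSpace ℝ (Fin n), ‖d‖ ≤ 1 ∧
        r = Finset.univ.sup' ⟨⟨0, hm⟩, Finset.mem_univ _⟩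
          (fun j => (inner ℝ (G j) d : ℝ))} = 0 ↔
      ∃ lam : Fin m → ℝ, (∀ j, 0 ≤ lam j) ∧ ∑ j, lam j = 1 ∧ ∑ j, lam j • G j = 0) :=
  stmt9_general hm G
end

section
/- (Per-iteration descent for MO-Adagrad) Suppose each ∇f_j is L_j-Lipschitz, L = max_j L_j, Φ(x) = max_j f_j(x). Let g be the minimal-norm convex combination of gradients at x^k, w > 0, and x^{k+1} = x^k - g/w. Then Φ(x^{k+1}) ≤ Φ(x^k) - ‖g‖₂²/w + (L/2)·‖g‖₂²/w². -/
/-!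
Each `f j` lies below its quadratic model at `xk` (descent lemma, proved by comparing
`t ↦ f j (xk + t • d)` with the model along the segment). The minimal-norm point `g` of the
convex hull of the gradients is the projection of `0` onto that hull, so the variational
inequality of the projection gives `‖g‖² ≤ ⟪∇f j xk, g⟫` for every `j`. Plugging the step
`-g / w` into the model bounds every `f j xk1`, hence their maximum.
-/

open scoped RealInnerProductSpace

section Gradient

variable {E : Type*} [NormedAddCommGroup E] [InnerProductSpace ℝ E] [CompleteSpace E]
  {f : E → ℝ} {Gf : E → E}

theorem hasDerivAt_comp_add_smul_of_hasGradientAt (hgrad : ∀ y, HasGradientAt f (Gf y) y)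
    (x d : E) (t : ℝ) :
    HasDerivAt (fun s : ℝ => f (x + s • d)) ⟪Gf (x + t • d), d⟫ t := by
  have hline : HasDerivAt (fun s : ℝ => x + s • d) d t := by
    simpa using ((hasDerivAt_id t).smul_const d).const_add x
  exact ((hgrad (x + t • d)).hasFDerivAt.comp_hasDerivAt t hline).congr_deriv (by simp)

theorem le_add_inner_add_sq_of_lipschitz_gradient (hgrad : ∀ y, HasGradientAt f (Gf y) y)
    {L : ℝ} (hLip : ∀ y z, ‖Gf y - Gf z‖ ≤ L * ‖y - z‖) (x y : E) :
    f y ≤ f x + ⟪Gf x, y - x⟫ + L / 2 * ‖y - x‖ ^ 2 := by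
  set d := y - x
  have hmodel : ∀ t : ℝ, HasDerivAt (fun s : ℝ => f x + s * ⟪Gf x, d⟫ + L / 2 * s ^ 2 * ‖d‖ ^ 2)
      (⟪Gf x, d⟫ + L * t * ‖d‖ ^ 2) t := fun t =>
    ((((hasDerivAt_id t).mul_const ⟪Gf x, d⟫).const_add (f x)).add
      (((hasDerivAt_pow 2 t).const_mul (L / 2)).mul_const (‖d‖ ^ 2))).congr_deriv
      (by push_cast; ring)
  have hslope : ∀ t ∈ Set.Ico (0 : ℝ) 1, ⟪Gf (x + t • d), d⟫ ≤ ⟪Gf x, d⟫ + L * t * ‖d‖ ^ 2 := by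
    rintro t ⟨ht, -⟩
    have := calc ⟪Gf (x + t • d) - Gf x, d⟫ ≤ ‖Gf (x + t • d) - Gf x‖ * ‖d‖ :=
          real_inner_le_norm _ _
      _ ≤ L * ‖(x + t • d) - x‖ * ‖d‖ := by gcongr; exact hLip _ _
      _ = L * t * ‖d‖ ^ 2 := by
          rw [add_sub_cancel_left, norm_smul, Real.norm_of_nonneg ht]; ring
    rw [inner_sub_left] at this
    linarith
  have hline := hasDerivAt_comp_add_smul_of_hasGradientAt hgrad x d
  have key := image_le_of_deriv_right_le_deriv_boundary (a := 0) (b := 1)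
    (fun t _ => (hline t).continuousAt.continuousWithinAt) (fun t _ => (hline t).hasDerivWithinAt)
    (by simp) (fun t _ => (hmodel t).continuousAt.continuousWithinAt)
    (fun t _ => (hmodel t).hasDerivWithinAt) hslope (Set.right_mem_Icc.2 zero_le_one)
  simpa [d] using key

end Gradient

section MinNorm

variable {F : Type*} [NormedAddCommGroup F] [InnerProductSpace ℝ F]

theorem Convex.sq_norm_le_inner_of_isMinOn_norm {K : Set F} (hK : Convex ℝ K) {g : F}
    (hg : g ∈ K) (hmin : IsMinOn (‖·‖) K g) {v : F} (hv : v ∈ K) : ‖g‖ ^ 2 ≤ ⟪v, g⟫ := by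
  have : Nonempty K := ⟨⟨g, hg⟩⟩
  have hinf : ‖0 - g‖ = ⨅ w : K, ‖0 - (w : F)‖ :=
    le_antisymm (le_ciInf fun w => by simpa using hmin w.2)
      (ciInf_le ⟨0, by rintro _ ⟨w, rfl⟩; positivity⟩ (⟨g, hg⟩ : K))
  have := (norm_eq_iInf_iff_real_inner_le_zero hK hg).1 hinf v hv
  rw [zero_sub, inner_neg_left, inner_sub_right, real_inner_self_eq_norm_sq,
    real_inner_comm] at this
  linarith

theorem sq_norm_le_inner_of_isMinOn_stdSimplex {ι : Type*} [Fintype ι] (v : ι → F)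
    {lam : ι → ℝ} (hlam : lam ∈ stdSimplex ℝ ι)
    (hmin : ∀ mu ∈ stdSimplex ℝ ι, ‖∑ i, lam i • v i‖ ≤ ‖∑ i, mu i • v i‖) (j : ι) :
    ‖∑ i, lam i • v i‖ ^ 2 ≤ ⟪v j, ∑ i, lam i • v i⟫ := by
  classical
  set T := Fintype.linearCombination ℝ v
  have hK : Convex ℝ (T '' stdSimplex ℝ ι) := (convex_stdSimplex ℝ ι).linear_image T
  refine hK.sq_norm_le_inner_of_isMinOn_norm ⟨lam, hlam, rfl⟩ ?_ ?_
  · rintro _ ⟨mu, hmu, rfl⟩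
    exact hmin mu hmu
  · exact ⟨Pi.single j 1, single_mem_stdSimplex ℝ j, by simp [T]⟩

end MinNorm

/-- per-iteration descent for MO-Adagrad:
`Φ(x^{k+1}) ≤ Φ(x^k) - ‖g‖²/w + (L/2)‖g‖²/w²`. -/
theorem stmt11 {n m : ℕ} (hm : 0 < m) (f : Fin m → EuclideanSpace ℝ (Fin n) → ℝ)
    (Gf : Fin m → EuclideanSpace ℝ (Fin n) → EuclideanSpace ℝ (Fin n))
    (hgrad : ∀ j y, HasGradientAt (f j) (Gf j y) y)
    (L : Fin m → ℝ)
    (hLip : ∀ j, ∀ y z : EuclideanSpace ℝ (Fin n), ‖Gf j y - Gf j z‖ ≤ L j * ‖y - z‖)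
    (xk : EuclideanSpace ℝ (Fin n))
    (lam : Fin m → ℝ) (hpos : ∀ j, 0 ≤ lam j) (hsum : ∑ j, lam j = 1)
    (hminim : ∀ mu : Fin m → ℝ, (∀ j, 0 ≤ mu j) → ∑ j, mu j = 1 →
      ‖∑ j, lam j • Gf j xk‖ ^ 2 ≤ ‖∑ j, mu j • Gf j xk‖ ^ 2)
    (g : EuclideanSpace ℝ (Fin n)) (hg : g = ∑ j, lam j • Gf j xk)
    (w : ℝ) (hw : 0 < w)
    (xk1 : EuclideanSpace ℝ (Fin n)) (hstep : xk1 = xk - w⁻¹ • g) :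
    Finset.univ.sup' ⟨⟨0, hm⟩, Finset.mem_univ _⟩ (fun j => f j xk1) ≤
      Finset.univ.sup' ⟨⟨0, hm⟩, Finset.mem_univ _⟩ (fun j => f j xk) -
        ‖g‖ ^ 2 / w +
        (Finset.univ.sup' ⟨⟨0, hm⟩, Finset.mem_univ _⟩ L / 2) * (‖g‖ ^ 2 / w ^ 2) := by
  have hmin : ∀ mu ∈ stdSimplex ℝ (Fin m), ‖∑ j, lam j • Gf j xk‖ ≤ ‖∑ j, mu j • Gf j xk‖ :=
    fun mu hmu => (pow_le_pow_iff_left₀ (norm_nonneg _) (norm_nonneg _) two_ne_zero).1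
      (hminim mu hmu.1 hmu.2)
  have hangle : ∀ j, ‖g‖ ^ 2 ≤ ⟪Gf j xk, g⟫ := by
    subst hg
    exact sq_norm_le_inner_of_isMinOn_stdSimplex (Gf · xk) ⟨hpos, hsum⟩ hmin
  refine Finset.sup'_le _ _ fun j _ => ?_
  have hdesc : f j xk1 ≤ f j xk - ⟪Gf j xk, g⟫ / w + L j / 2 * (‖g‖ ^ 2 / w ^ 2) := by
    subst hstep
    have := le_add_inner_add_sq_of_lipschitz_gradient (hgrad j) (hLip j) xk (xk - w⁻¹ • g)
    rwa [sub_sub_cancel_left, inner_neg_right, real_inner_smul_right, norm_neg,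
      norm_smul, Real.norm_of_nonneg (inv_nonneg.2 hw.le), mul_pow, ← sub_eq_add_neg,
      inv_mul_eq_div, inv_pow, inv_mul_eq_div] at this
  refine hdesc.trans ?_
  gcongr
  · exact Finset.le_sup' (fun j => f j xk) (Finset.mem_univ j)
  · exact hangle j
  · exact Finset.le_sup' L (Finset.mem_univ j)
end

section
/- (MO-Adagrad convergence rate) Let the MO-Adagrad weights be w_k = √(ς + Σ_{ℓ=0}^{k} ‖g_ℓ‖₂²) with ς ∈ (0,1), steps x^{k+1} = x^k - g_k/w_k, where g_k is the minimal-norm convex combination of gradients at x^k, and suppose Φ = max_j f_j is bounded below by Φ_low with Γ₀ = Φ(x^0) - Φ_low, and each ∇f_j is L_j-Lipschitz with L = max_j L_j. Then for all k ≥ 0, (1/(k+1)) Σ_{ℓ=0}^{k} ‖g_ℓ‖₂² ≤ θ/(k+1), i.e., Σ_{ℓ=0}^{k} ‖g_ℓ‖₂² ≤ θ, where θ = max{ ς, (ς/2)·e^{2Γ₀/L}, 2048·L⁴/ς }. -/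
/-!
Each `f_j` satisfies the descent lemma, and the min-norm direction `g_k` is a common descent
direction: `‖g_k‖² ≤ ⟪∇f_j(x^k), g_k⟫` for every `j`, the variational inequality of the projection
of `0` onto the convex hull of the gradients. So `Φ = max_j f_j` drops by at least
`‖g_ℓ‖²/w_ℓ - (L/2)‖g_ℓ‖²/w_ℓ²` at each step. Telescoping against `Φ_low`, bounding
`Σ ‖g_ℓ‖²/w_ℓ` below by `S_k/w_k` (the weights increase) and `Σ ‖g_ℓ‖²/w_ℓ²` above by
`log ((ς + S_k)/ς)` gives `S_k/w_k ≤ Γ₀ + (L/2) log ((ς + S_k)/ς)` for `S_k = Σ_{ℓ≤k} ‖g_ℓ‖²`.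
If `S_k > ς`, this reads `(√ς/2) V ≤ Γ₀ + L log V` for `V = √(2 S_k/ς) ≥ 1`, which caps `V`.
If `L = 0`, the gradients are constant, hence so is `‖g_ℓ‖`, and `S_k/w_k ≤ Γ₀` for all `k`
forces it to vanish.
-/

open Finset Real InnerProductSpace

section Descent

variable {E : Type*} [NormedAddCommGroup E] [InnerProductSpace ℝ E] [CompleteSpace E]
  {f : E → ℝ} {G : E → E} {L : ℝ}

theorem le_add_inner_add_of_lipschitz_gradient (hf : ∀ y, HasGradientAt f (G y) y)
    (hG : ∀ y z, ‖G y - G z‖ ≤ L * ‖y - z‖) (x v : E) :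
    f (x + v) ≤ f x + ⟪G x, v⟫_ℝ + L / 2 * ‖v‖ ^ 2 := by
  set ψ : ℝ → ℝ := fun t => f (x + t • v) - t * ⟪G x, v⟫_ℝ - L / 2 * t ^ 2 * ‖v‖ ^ 2
  have hψ : ∀ t, HasDerivAt ψ (⟪G (x + t • v) - G x, v⟫_ℝ - L * t * ‖v‖ ^ 2) t := by
    intro t
    have hline : HasDerivAt (fun t : ℝ => x + t • v) v t := by
      simpa using ((hasDerivAt_id t).smul_const v).const_add x
    have hfline := (hf (x + t • v)).hasFDerivAt.comp_hasDerivAt t hline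
    refine ((hfline.sub ((hasDerivAt_id t).mul_const ⟪G x, v⟫_ℝ)).sub
      (((hasDerivAt_pow 2 t).const_mul (L / 2)).mul_const (‖v‖ ^ 2))).congr_deriv ?_
    simp only [toDual_apply_apply, inner_sub_left]
    ring
  have hanti : AntitoneOn ψ (Set.Icc 0 1) := by
    refine antitoneOn_of_hasDerivWithinAt_nonpos (convex_Icc 0 1)
      (fun t _ => (hψ t).continuousAt.continuousWithinAt) (fun t _ => (hψ t).hasDerivWithinAt) ?_
    intro t ht
    rw [interior_Icc] at ht
    calc ⟪G (x + t • v) - G x, v⟫_ℝ - L * t * ‖v‖ ^ 2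
        ≤ L * ‖x + t • v - x‖ * ‖v‖ - L * t * ‖v‖ ^ 2 := by
          gcongr
          exact (real_inner_le_norm _ _).trans (mul_le_mul_of_nonneg_right (hG _ _) (norm_nonneg _))
      _ = 0 := by
          rw [add_sub_cancel_left, norm_smul, norm_of_nonneg ht.1.le]
          ring
  have := hanti (Set.left_mem_Icc.2 zero_le_one) (Set.right_mem_Icc.2 zero_le_one) zero_le_one
  norm_num [ψ] at this
  linarith

theorem le_sub_mul_add_of_lipschitz_gradient (hf : ∀ y, HasGradientAt f (G y) y)
    (hG : ∀ y z, ‖G y - G z‖ ≤ L * ‖y - z‖) {x g : E} (hg : ‖g‖ ^ 2 ≤ ⟪G x, g⟫_ℝ)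
    {t : ℝ} (ht : 0 ≤ t) :
    f (x - t • g) ≤ f x - t * ‖g‖ ^ 2 + L / 2 * t ^ 2 * ‖g‖ ^ 2 := by
  have h := le_add_inner_add_of_lipschitz_gradient hf hG x (-(t • g))
  rw [← sub_eq_add_neg, inner_neg_right, real_inner_smul_right, norm_neg, norm_smul,
    norm_of_nonneg ht] at h
  nlinarith [mul_le_mul_of_nonneg_left hg ht]

theorem sup'_sub_smul_le_of_lipschitz_gradient {ι : Type*} {s : Finset ι} (hs : s.Nonempty)
    {f : ι → E → ℝ} {G : ι → E → E} {L : ι → ℝ} (hf : ∀ j y, HasGradientAt (f j) (G j y) y)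
    (hG : ∀ j y z, ‖G j y - G j z‖ ≤ L j * ‖y - z‖) {x g : E}
    (hg : ∀ j, ‖g‖ ^ 2 ≤ ⟪G j x, g⟫_ℝ) {t : ℝ} (ht : 0 ≤ t) :
    s.sup' hs (fun j => f j (x - t • g)) ≤
      s.sup' hs (fun j => f j x) - t * ‖g‖ ^ 2 + s.sup' hs L / 2 * t ^ 2 * ‖g‖ ^ 2 := by
  refine sup'_le hs _ fun j hj => ?_
  have hLj : L j / 2 * t ^ 2 * ‖g‖ ^ 2 ≤ s.sup' hs L / 2 * t ^ 2 * ‖g‖ ^ 2 := by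
    gcongr
    exact le_sup' L hj
  linarith [le_sub_mul_add_of_lipschitz_gradient (hf j) (hG j) (hg j) ht,
    le_sup' (fun j => f j x) hj]

end Descent

theorem nonneg_of_norm_sub_le_mul_norm_sub {E F : Type*} [NormedAddCommGroup E] [Nontrivial E]
    [SeminormedAddCommGroup F] {G : E → F} {L : ℝ} (hG : ∀ y z, ‖G y - G z‖ ≤ L * ‖y - z‖) :
    0 ≤ L := by
  obtain ⟨y, hy⟩ := exists_ne (0 : E)
  have h := (norm_nonneg _).trans (hG y 0)
  rw [sub_zero] at h
  exact nonneg_of_mul_nonneg_left h (norm_pos_iff.2 hy)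

theorem eq_of_norm_sub_le_mul_norm_sub_of_nonpos {E F : Type*} [SeminormedAddCommGroup E]
    [NormedAddCommGroup F] {G : E → F} {L : ℝ} (hG : ∀ y z, ‖G y - G z‖ ≤ L * ‖y - z‖)
    (hL : L ≤ 0) (y z : E) : G y = G z :=
  sub_eq_zero.1 <| norm_le_zero_iff.1 <|
    (hG y z).trans (mul_nonpos_of_nonpos_of_nonneg hL (norm_nonneg _))

section MinNorm

variable {E : Type*} [NormedAddCommGroup E] [InnerProductSpace ℝ E]

theorem norm_sq_le_inner_of_forall_norm_le {K : Set E} (hK : Convex ℝ K) {u : E} (hu : u ∈ K)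
    (hmin : ∀ w ∈ K, ‖u‖ ≤ ‖w‖) {w : E} (hw : w ∈ K) : ‖u‖ ^ 2 ≤ ⟪w, u⟫_ℝ := by
  have : Nonempty K := ⟨⟨u, hu⟩⟩
  have hinf : ‖0 - u‖ = ⨅ w : K, ‖0 - (w : E)‖ := by
    refine le_antisymm (le_ciInf fun w => ?_) (ciInf_le ⟨0, ?_⟩ (⟨u, hu⟩ : K))
    · simpa using hmin w w.2
    · rintro _ ⟨w, rfl⟩
      exact norm_nonneg _
  have h := (norm_eq_iInf_iff_real_inner_le_zero hK hu).1 hinf w hw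
  rw [zero_sub, inner_neg_left, inner_sub_right, real_inner_self_eq_norm_sq,
    real_inner_comm] at h
  linarith

theorem norm_sq_le_inner_of_minimal_convex_combination {ι : Type*} [Fintype ι] (v : ι → E)
    {lam : ι → ℝ} (hpos : ∀ j, 0 ≤ lam j) (hsum : ∑ j, lam j = 1)
    (hmin : ∀ mu : ι → ℝ, (∀ j, 0 ≤ mu j) → ∑ j, mu j = 1 →
      ‖∑ j, lam j • v j‖ ^ 2 ≤ ‖∑ j, mu j • v j‖ ^ 2) (i : ι) :
    ‖∑ j, lam j • v j‖ ^ 2 ≤ ⟪v i, ∑ j, lam j • v j⟫_ℝ := by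
  classical
  have hK := (convex_stdSimplex ℝ ι).linear_image (Fintype.linearCombination ℝ v)
  refine norm_sq_le_inner_of_forall_norm_le hK ⟨lam, ⟨hpos, hsum⟩, ?_⟩ ?_
    ⟨Pi.single i 1, single_mem_stdSimplex ℝ i, ?_⟩
  · simp [Fintype.linearCombination_apply]
  · rintro _ ⟨mu, ⟨hmu, hmu1⟩, rfl⟩
    simpa [Fintype.linearCombination_apply] using
      (sq_le_sq₀ (norm_nonneg _) (norm_nonneg _)).1 (hmin mu hmu hmu1)
  · simp [Fintype.linearCombination_apply, Pi.single_apply]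

end MinNorm

theorem le_max_of_mul_le_add_mul_log {a b c u : ℝ} (ha : 0 < a) (hc : 0 < c) (hu : 1 ≤ u)
    (h : a * u ≤ b + c * log u) : u ≤ max (exp (b / c)) (16 * c ^ 2 / a ^ 2) := by
  rcases le_or_gt (c * log u) b with hb | hb
  · refine le_max_of_le_left ((le_exp_log u).trans (exp_le_exp.2 ?_))
    rw [le_div_iff₀ hc]
    linarith
  · refine le_max_of_le_right ?_
    have hs : 1 ≤ √u := one_le_sqrt.2 hu
    have hsq : √u * √u = u := mul_self_sqrt (zero_le_one.trans hu)
    -- `log u = 2 log √u ≤ 2 (√u - 1)`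
    have hlog : log u ≤ 2 * √u := by
      have := log_le_sub_one_of_pos (zero_lt_one.trans_le hs)
      rw [log_sqrt (zero_le_one.trans hu)] at this
      linarith
    have hau : a * √u ≤ 4 * c := by nlinarith
    rw [le_div_iff₀ (by positivity), ← hsq]
    nlinarith [mul_self_le_mul_self (by positivity) hau]

theorem le_max_of_div_sqrt_le_add_log {S ς Γ L : ℝ} (hς : 0 < ς) (hL : 0 < L) (hS : ς < S)
    (h : S / √(ς + S) ≤ Γ + L / 2 * (log (ς + S) - log ς)) :
    S ≤ max (ς / 2 * exp (2 * Γ / L)) (2048 * L ^ 4 / ς) := by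
  set V := √(2 * S / ς)
  have hV1 : 1 ≤ V := one_le_sqrt.2 ((one_le_div hς).2 (by linarith))
  have hV2 : V ^ 2 = 2 * S / ς := sq_sqrt (div_nonneg (by linarith) hς.le)
  have hlower : √ς / 2 * V ≤ S / √(ς + S) := by
    have h2S : √ς * V = √(2 * S) := by
      rw [← sqrt_mul hς.le]
      congr 1
      field_simp
    rw [le_div_iff₀ (sqrt_pos.2 (by linarith))]
    calc √ς / 2 * V * √(ς + S) = √(2 * S) / 2 * √(ς + S) := by rw [← h2S]; ring
      _ ≤ √(2 * S) / 2 * √(2 * S) := by gcongr; linarith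
      _ = S := by rw [div_mul_eq_mul_div, mul_self_sqrt (by linarith)]; ring
  have hupper : log (ς + S) - log ς ≤ 2 * log V := by
    calc log (ς + S) - log ς = log ((ς + S) / ς) := (log_div (by linarith) hς.ne').symm
      _ ≤ log (V ^ 2) := log_le_log (div_pos (by linarith) hς) (by rw [hV2]; gcongr; linarith)
      _ = 2 * log V := by rw [log_pow]; norm_num
  have hV := le_max_of_mul_le_add_mul_log (b := Γ) (by positivity) hL hV1
    ((hlower.trans h).trans (by nlinarith))
  have hSV : S = ς / 2 * V ^ 2 := by
    rw [hV2]
    field_simp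
  rw [hSV]
  rcases le_max_iff.1 hV with hV | hV
  · refine le_max_of_le_left ?_
    calc ς / 2 * V ^ 2 ≤ ς / 2 * exp (Γ / L) ^ 2 := by gcongr
      _ = ς / 2 * exp (2 * Γ / L) := by rw [← exp_nat_mul, Nat.cast_ofNat, mul_div_assoc]
  · refine le_max_of_le_right ?_
    have hς4 : (√ς / 2) ^ 2 = ς / 4 := by rw [div_pow, sq_sqrt hς.le]; norm_num
    rw [hς4] at hV
    calc ς / 2 * V ^ 2 ≤ ς / 2 * (16 * L ^ 2 / (ς / 4)) ^ 2 := by gcongr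
      _ = 2048 * L ^ 4 / ς := by field_simp; norm_num

noncomputable def adagradWeight (ς : ℝ) (a : ℕ → ℝ) (k : ℕ) : ℝ :=
  √(ς + ∑ ℓ ∈ range (k + 1), a ℓ)

section Adagrad

variable {a : ℕ → ℝ} {ς : ℝ}

theorem adagradWeight_sq (ha : ∀ ℓ, 0 ≤ a ℓ) (hς : 0 ≤ ς) (k : ℕ) :
    adagradWeight ς a k ^ 2 = ς + ∑ ℓ ∈ range (k + 1), a ℓ :=
  sq_sqrt (add_nonneg hς (sum_nonneg fun ℓ _ => ha ℓ))

theorem adagradWeight_pos (ha : ∀ ℓ, 0 ≤ a ℓ) (hς : 0 < ς) (k : ℕ) : 0 < adagradWeight ς a k :=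
  sqrt_pos.2 (add_pos_of_pos_of_nonneg hς (sum_nonneg fun ℓ _ => ha ℓ))

theorem adagradWeight_mono (ha : ∀ ℓ, 0 ≤ a ℓ) : Monotone (adagradWeight ς a) :=
  fun _ _ hkl => sqrt_le_sqrt (add_le_add_right
    (sum_le_sum_of_subset_of_nonneg (range_subset_range.2 (by omega)) fun ℓ _ _ => ha ℓ) ς)

theorem sum_range_div_le_log_sub_log (ha : ∀ ℓ, 0 ≤ a ℓ) (hς : 0 < ς) (K : ℕ) :
    ∑ ℓ ∈ range K, a ℓ / (ς + ∑ i ∈ range (ℓ + 1), a i) ≤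
      log (ς + ∑ ℓ ∈ range K, a ℓ) - log ς := by
  induction K with
  | zero => simp
  | succ K ih =>
    set A := ς + ∑ ℓ ∈ range K, a ℓ
    have hA : 0 < A := add_pos_of_pos_of_nonneg hς (sum_nonneg fun ℓ _ => ha ℓ)
    have hB : 0 < A + a K := add_pos_of_pos_of_nonneg hA (ha K)
    have hstep : a K / (A + a K) ≤ log (A + a K) - log A := by
      have := one_sub_inv_le_log_of_pos (div_pos hB hA)
      rw [log_div hB.ne' hA.ne', inv_div] at this
      calc a K / (A + a K) = 1 - A / (A + a K) := by field_simp; ring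
        _ ≤ _ := this
    rw [sum_range_succ, sum_range_succ, ← add_assoc]
    linarith

theorem sum_div_adagradWeight_le_of_descent (ha : ∀ ℓ, 0 ≤ a ℓ) (hς : 0 < ς) {u : ℕ → ℝ}
    {L low : ℝ} (hL : 0 ≤ L)
    (hu : ∀ ℓ, u (ℓ + 1) ≤ u ℓ - (adagradWeight ς a ℓ)⁻¹ * a ℓ
      + L / 2 * (adagradWeight ς a ℓ)⁻¹ ^ 2 * a ℓ)
    (hlow : ∀ ℓ, low ≤ u ℓ) (K : ℕ) :
    (∑ ℓ ∈ range (K + 1), a ℓ) / adagradWeight ς a K ≤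
      u 0 - low + L / 2 * (log (ς + ∑ ℓ ∈ range (K + 1), a ℓ) - log ς) := by
  set w := adagradWeight ς a
  have htelescope : ∑ ℓ ∈ range (K + 1), ((w ℓ)⁻¹ * a ℓ - L / 2 * ((w ℓ)⁻¹ ^ 2 * a ℓ)) ≤
      u 0 - u (K + 1) := by
    rw [← sum_range_sub']
    exact sum_le_sum fun ℓ _ => by linarith [hu ℓ]
  have hlower : (∑ ℓ ∈ range (K + 1), a ℓ) / w K ≤ ∑ ℓ ∈ range (K + 1), (w ℓ)⁻¹ * a ℓ := by
    rw [sum_div]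
    refine sum_le_sum fun ℓ hℓ => ?_
    rw [inv_mul_eq_div]
    exact div_le_div_of_nonneg_left (ha ℓ) (adagradWeight_pos ha hς ℓ)
      (adagradWeight_mono ha (by simpa [Nat.lt_succ_iff] using hℓ))
  have hupper : ∑ ℓ ∈ range (K + 1), (w ℓ)⁻¹ ^ 2 * a ℓ ≤
      log (ς + ∑ ℓ ∈ range (K + 1), a ℓ) - log ς := by
    convert sum_range_div_le_log_sub_log ha hς (K + 1) using 2 with ℓ
    rw [inv_pow, adagradWeight_sq ha hς.le, inv_mul_eq_div]
  rw [sum_sub_distrib, ← mul_sum] at htelescope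
  linarith [hlow (K + 1), mul_le_mul_of_nonneg_left hupper (by positivity : (0:ℝ) ≤ L / 2)]

theorem sum_le_max_of_adagrad_descent (ha : ∀ ℓ, 0 ≤ a ℓ) (hς : 0 < ς) {u : ℕ → ℝ}
    {L low : ℝ} (hL : 0 < L)
    (hu : ∀ ℓ, u (ℓ + 1) ≤ u ℓ - (adagradWeight ς a ℓ)⁻¹ * a ℓ
      + L / 2 * (adagradWeight ς a ℓ)⁻¹ ^ 2 * a ℓ)
    (hlow : ∀ ℓ, low ≤ u ℓ) (K : ℕ) :
    ∑ ℓ ∈ range (K + 1), a ℓ ≤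
      max (max ς (ς / 2 * exp (2 * (u 0 - low) / L))) (2048 * L ^ 4 / ς) := by
  rcases le_or_gt (∑ ℓ ∈ range (K + 1), a ℓ) ς with hS | hS
  · exact le_max_of_le_left (le_max_of_le_left hS)
  have h := sum_div_adagradWeight_le_of_descent ha hς hL.le hu hlow K
  rw [adagradWeight] at h
  exact (le_max_of_div_sqrt_le_add_log hς hL hS h).trans
    (max_le_max_right _ (le_max_right _ _))

theorem eq_zero_of_forall_sum_div_adagradWeight_le {c Γ : ℝ} (hς : 0 < ς) (hc : 0 ≤ c)
    (ha : ∀ ℓ, a ℓ = c)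
    (h : ∀ K, (∑ ℓ ∈ range (K + 1), a ℓ) / adagradWeight ς a K ≤ Γ) : c = 0 := by
  have ha' : ∀ ℓ, 0 ≤ a ℓ := fun ℓ => (ha ℓ).symm ▸ hc
  refine (hc.eq_or_lt.resolve_right fun hc => ?_).symm
  obtain ⟨K, hK⟩ := exists_nat_gt ((ς + 2 * Γ ^ 2) / c)
  rw [div_lt_iff₀ hc] at hK
  have hS : ∑ ℓ ∈ range (K + 1), a ℓ = (K + 1) * c := by simp [ha]
  have hw := adagradWeight_sq ha' hς.le K
  have hbound := h K
  rw [div_le_iff₀ (adagradWeight_pos ha' hς K)] at hbound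
  rw [hS] at hw hbound
  -- `S ≤ Γ w` and `w² = ς + S` force `S ≤ ς + 2 Γ²`
  nlinarith [mul_self_le_mul_self (by positivity) hbound]

end Adagrad

theorem stmt15_general {n m : ℕ} (hm : 0 < m) (f : Fin m → EuclideanSpace ℝ (Fin n) → ℝ)
    (Gf : Fin m → EuclideanSpace ℝ (Fin n) → EuclideanSpace ℝ (Fin n))
    (hgrad : ∀ j y, HasGradientAt (f j) (Gf j y) y)
    (L : Fin m → ℝ)
    (hLip : ∀ j, ∀ y z : EuclideanSpace ℝ (Fin n), ‖Gf j y - Gf j z‖ ≤ L j * ‖y - z‖)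
    (Φlow : ℝ)
    (hlow : ∀ y : EuclideanSpace ℝ (Fin n),
      Φlow ≤ Finset.univ.sup' ⟨⟨0, hm⟩, Finset.mem_univ _⟩ (fun j => f j y))
    (ς : ℝ) (hς0 : 0 < ς)
    (x : ℕ → EuclideanSpace ℝ (Fin n)) (g : ℕ → EuclideanSpace ℝ (Fin n)) (w : ℕ → ℝ)
    (lam : ℕ → Fin m → ℝ) (hpos : ∀ ℓ j, 0 ≤ lam ℓ j) (hsum : ∀ ℓ, ∑ j, lam ℓ j = 1)
    (hminim : ∀ ℓ, ∀ mu : Fin m → ℝ, (∀ j, 0 ≤ mu j) → ∑ j, mu j = 1 →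
      ‖∑ j, lam ℓ j • Gf j (x ℓ)‖ ^ 2 ≤ ‖∑ j, mu j • Gf j (x ℓ)‖ ^ 2)
    (hgdef : ∀ ℓ, g ℓ = ∑ j, lam ℓ j • Gf j (x ℓ))
    (hwdef : ∀ k, w k = Real.sqrt (ς + ∑ ℓ ∈ Finset.range (k + 1), ‖g ℓ‖ ^ 2))
    (hstep : ∀ k, x (k + 1) = x k - (w k)⁻¹ • g k) :
    ∀ k : ℕ,
      ∑ ℓ ∈ Finset.range (k + 1), ‖g ℓ‖ ^ 2 ≤
        max (max ς ((ς / 2) * Real.exp (2 *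
            (Finset.univ.sup' ⟨⟨0, hm⟩, Finset.mem_univ _⟩ (fun j => f j (x 0)) - Φlow) /
            Finset.univ.sup' ⟨⟨0, hm⟩, Finset.mem_univ _⟩ L)))
          (2048 * (Finset.univ.sup' ⟨⟨0, hm⟩, Finset.mem_univ _⟩ L) ^ 4 / ς) := by
  intro k
  rcases subsingleton_or_nontrivial (EuclideanSpace ℝ (Fin n)) with hE | hE
  · have hg : ∀ ℓ, g ℓ = 0 := fun ℓ => Subsingleton.elim _ _
    simp only [hg, norm_zero, ne_eq, OfNat.ofNat_ne_zero, not_false_eq_true, zero_pow,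
      sum_const_zero]
    exact le_max_of_le_left (le_max_of_le_left hς0.le)
  set a : ℕ → ℝ := fun ℓ => ‖g ℓ‖ ^ 2
  have ha : ∀ ℓ, 0 ≤ a ℓ := fun ℓ => sq_nonneg _
  obtain rfl : w = adagradWeight ς a := funext hwdef
  have hinner : ∀ ℓ j, ‖g ℓ‖ ^ 2 ≤ ⟪Gf j (x ℓ), g ℓ⟫_ℝ := fun ℓ j =>
    hgdef ℓ ▸ norm_sq_le_inner_of_minimal_convex_combination _ (hpos ℓ) (hsum ℓ) (hminim ℓ) j
  have hdesc := fun ℓ => hstep ℓ ▸ sup'_sub_smul_le_of_lipschitz_gradient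
    (s := (univ : Finset (Fin m))) ⟨⟨0, hm⟩, mem_univ _⟩ hgrad hLip (hinner ℓ)
    (inv_nonneg.2 (adagradWeight_pos ha hς0 ℓ).le)
  have hL : 0 ≤ univ.sup' ⟨⟨0, hm⟩, mem_univ _⟩ L :=
    (nonneg_of_norm_sub_le_mul_norm_sub (hLip ⟨0, hm⟩)).trans (le_sup' L (mem_univ _))
  rcases hL.eq_or_lt with hL0 | hLpos
  · have hconst : ∀ j y, Gf j y = Gf j (x 0) := fun j y =>
      eq_of_norm_sub_le_mul_norm_sub_of_nonpos (hLip j) ((le_sup' L (mem_univ j)).trans hL0.ge) y _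
    have ha0 : ∀ ℓ, a ℓ = a 0 := fun ℓ => by
      have h₁ := hminim ℓ (lam 0) (hpos 0) (hsum 0)
      have h₂ := hminim 0 (lam ℓ) (hpos ℓ) (hsum ℓ)
      simp only [a, hgdef, fun j => hconst j (x ℓ)] at h₁ h₂ ⊢
      exact le_antisymm h₁ h₂
    have hzero := eq_zero_of_forall_sum_div_adagradWeight_le hς0 (ha 0) ha0 fun K => by
      simpa [← hL0] using sum_div_adagradWeight_le_of_descent ha hς0 hL hdesc
        (fun ℓ => hlow (x ℓ)) K
    simp only [ha0, hzero, sum_const_zero]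
    exact le_max_of_le_left (le_max_of_le_left hς0.le)
  · exact sum_le_max_of_adagrad_descent ha hς0 hLpos hdesc (fun ℓ => hlow (x ℓ)) k

/-- MO-Adagrad convergence rate: for all `k`,
`Σ_{ℓ=0}^{k} ‖g_ℓ‖² ≤ θ` with `θ = max{ς, (ς/2)e^{2Γ₀/L}, 2048 L⁴/ς}`. -/
theorem stmt15 {n m : ℕ} (hm : 0 < m) (f : Fin m → EuclideanSpace ℝ (Fin n) → ℝ)
    (Gf : Fin m → EuclideanSpace ℝ (Fin n) → EuclideanSpace ℝ (Fin n))
    (hgrad : ∀ j y, HasGradientAt (f j) (Gf j y) y)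
    (L : Fin m → ℝ)
    (hLip : ∀ j, ∀ y z : EuclideanSpace ℝ (Fin n), ‖Gf j y - Gf j z‖ ≤ L j * ‖y - z‖)
    (Φlow : ℝ)
    (hlow : ∀ y : EuclideanSpace ℝ (Fin n),
      Φlow ≤ Finset.univ.sup' ⟨⟨0, hm⟩, Finset.mem_univ _⟩ (fun j => f j y))
    (ς : ℝ) (hς0 : 0 < ς) (hς1 : ς < 1)
    (x : ℕ → EuclideanSpace ℝ (Fin n)) (g : ℕ → EuclideanSpace ℝ (Fin n)) (w : ℕ → ℝ)
    (lam : ℕ → Fin m → ℝ) (hpos : ∀ ℓ j, 0 ≤ lam ℓ j) (hsum : ∀ ℓ, ∑ j, lam ℓ j = 1)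
    (hminim : ∀ ℓ, ∀ mu : Fin m → ℝ, (∀ j, 0 ≤ mu j) → ∑ j, mu j = 1 →
      ‖∑ j, lam ℓ j • Gf j (x ℓ)‖ ^ 2 ≤ ‖∑ j, mu j • Gf j (x ℓ)‖ ^ 2)
    (hgdef : ∀ ℓ, g ℓ = ∑ j, lam ℓ j • Gf j (x ℓ))
    (hwdef : ∀ k, w k = Real.sqrt (ς + ∑ ℓ ∈ Finset.range (k + 1), ‖g ℓ‖ ^ 2))
    (hstep : ∀ k, x (k + 1) = x k - (w k)⁻¹ • g k) :
    ∀ k : ℕ,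
      ∑ ℓ ∈ Finset.range (k + 1), ‖g ℓ‖ ^ 2 ≤
        max (max ς ((ς / 2) * Real.exp (2 *
            (Finset.univ.sup' ⟨⟨0, hm⟩, Finset.mem_univ _⟩ (fun j => f j (x 0)) - Φlow) /
            Finset.univ.sup' ⟨⟨0, hm⟩, Finset.mem_univ _⟩ L)))
          (2048 * (Finset.univ.sup' ⟨⟨0, hm⟩, Finset.mem_univ _⟩ L) ^ 4 / ς) :=
  stmt15_general hm f Gf hgrad L hLip Φlow hlow ς hς0 x g w lam hpos hsum hminim hgdef hwdef hstep
end

section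
/- (Improvement step in the simplex subproblem) Let g_1,...,g_m ∈ ℝ^n, λ ∈ Δ_m, g = Σ_j λ_j g_j, and suppose there are indices ℓ, ℓ' with λ_ℓ > 0 and γ := (g_{ℓ'} - g_ℓ)ᵀ g < 0. Then for sufficiently small ε ∈ (0, λ_ℓ), the vector λ̃ defined by λ̃_ℓ = λ_ℓ - ε, λ̃_{ℓ'} = λ_{ℓ'} + ε, λ̃_j = λ_j otherwise, lies in Δ_m and satisfies ‖Σ_j λ̃_j g_j‖₂² = ‖g‖₂² + ε(ε‖g_{ℓ'} - g_ℓ‖₂² + 2γ) < ‖g‖₂². -/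
/-!
Moving weight `ε` from `g_ℓ` to `g_ℓ'` changes the convex combination `G` into `G + ε (g_ℓ' - g_ℓ)`,
whose squared norm is `‖G‖² + ε (ε ‖g_ℓ' - g_ℓ‖² + 2γ)`. Since `γ < 0`, the linear term dominates
the quadratic one for small `ε > 0`, and `ε < λ_ℓ` keeps the weights in the simplex.
-/

open Finset

section Exchange

variable {ι : Type*} [DecidableEq ι]

def exchangeWeights {R : Type*} [AddGroup R] (lam : ι → R) (ℓ ℓ' : ι) (ε : R) (j : ι) : R :=
  if j = ℓ then lam ℓ - ε else if j = ℓ' then lam ℓ' + ε else lam j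

theorem sum_exchangeWeights_smul [Fintype ι] {R M : Type*} [Ring R] [AddCommGroup M]
    [Module R M] {ℓ ℓ' : ι} (hne : ℓ ≠ ℓ') (lam : ι → R) (ε : R) (v : ι → M) :
    ∑ j, exchangeWeights lam ℓ ℓ' ε j • v j = ∑ j, lam j • v j + ε • (v ℓ' - v ℓ) := by
  have hterm : ∀ j, exchangeWeights lam ℓ ℓ' ε j • v j =
      lam j • v j + ((if j = ℓ' then ε • v j else 0) - (if j = ℓ then ε • v j else 0)) := by
    intro j
    unfold exchangeWeights
    by_cases hℓ : j = ℓ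
    · subst hℓ; simp [hne, sub_smul]; abel
    · by_cases hℓ' : j = ℓ'
      · subst hℓ'; simp [hℓ, add_smul]
      · simp [hℓ, hℓ']
  simp only [hterm, sum_add_distrib, sum_sub_distrib, sum_ite_eq', mem_univ, if_true, smul_sub]

theorem sum_exchangeWeights [Fintype ι] {R : Type*} [Ring R] {ℓ ℓ' : ι} (hne : ℓ ≠ ℓ')
    (lam : ι → R) (ε : R) : ∑ j, exchangeWeights lam ℓ ℓ' ε j = ∑ j, lam j := by
  simpa using sum_exchangeWeights_smul hne lam ε (fun _ => (1 : R))

theorem exchangeWeights_nonneg {lam : ι → ℝ} (hpos : ∀ j, 0 ≤ lam j) {ℓ ℓ' : ι} {ε : ℝ}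
    (hε : 0 ≤ ε) (hεℓ : ε ≤ lam ℓ) (j : ι) : 0 ≤ exchangeWeights lam ℓ ℓ' ε j := by
  unfold exchangeWeights
  split_ifs
  · linarith
  · linarith [hpos ℓ']
  · exact hpos j

end Exchange

theorem norm_add_smul_sq {E : Type*} [NormedAddCommGroup E] [InnerProductSpace ℝ E]
    (x d : E) (ε : ℝ) :
    ‖x + ε • d‖ ^ 2 = ‖x‖ ^ 2 + ε * (ε * ‖d‖ ^ 2 + 2 * inner ℝ d x) := by
  rw [norm_add_sq_real, norm_smul, real_inner_smul_right, real_inner_comm, mul_pow,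
    Real.norm_eq_abs, sq_abs]
  ring

theorem exists_pos_forall_mul_mul_add_neg {a γ : ℝ} (ha : 0 ≤ a) (hγ : γ < 0) :
    ∃ δ > 0, ∀ ε, 0 < ε → ε < δ → ε * (ε * a + 2 * γ) < 0 := by
  refine ⟨-2 * γ / (a + 1), by apply div_pos <;> linarith, fun ε hε hεδ => ?_⟩
  have hlin : ε * (a + 1) < -2 * γ := (lt_div_iff₀ (by linarith)).mp hεδ
  exact mul_neg_of_pos_of_neg hε (by nlinarith)

/-- improvement step in the simplex subproblem. -/
theorem stmt19 {n m : ℕ} (g : Fin m → EuclideanSpace ℝ (Fin n))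
    (lam : Fin m → ℝ) (hpos : ∀ j, 0 ≤ lam j) (hsum : ∑ j, lam j = 1)
    (G : EuclideanSpace ℝ (Fin n)) (hG : G = ∑ j, lam j • g j)
    (ℓ ℓ' : Fin m) (hne : ℓ ≠ ℓ') (hl : 0 < lam ℓ)
    (γ : ℝ) (hγdef : γ = (inner ℝ (g ℓ' - g ℓ) G : ℝ)) (hγ : γ < 0) :
    ∃ ε₀ : ℝ, 0 < ε₀ ∧ ε₀ ≤ lam ℓ ∧ ∀ ε : ℝ, 0 < ε → ε < ε₀ →
      (∀ j, 0 ≤ (fun j => if j = ℓ then lam ℓ - ε else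
          if j = ℓ' then lam ℓ' + ε else lam j) j) ∧
      (∑ j, (fun j => if j = ℓ then lam ℓ - ε else
          if j = ℓ' then lam ℓ' + ε else lam j) j) = 1 ∧
      ‖∑ j, (if j = ℓ then lam ℓ - ε else
          if j = ℓ' then lam ℓ' + ε else lam j) • g j‖ ^ 2 =
        ‖G‖ ^ 2 + ε * (ε * ‖g ℓ' - g ℓ‖ ^ 2 + 2 * γ) ∧
      ‖∑ j, (if j = ℓ then lam ℓ - ε else
          if j = ℓ' then lam ℓ' + ε else lam j) • g j‖ ^ 2 < ‖G‖ ^ 2 := by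
  obtain ⟨δ, hδ, hdescent⟩ := exists_pos_forall_mul_mul_add_neg (sq_nonneg ‖g ℓ' - g ℓ‖) hγ
  refine ⟨min (lam ℓ) δ, lt_min hl hδ, min_le_left _ _, fun ε hε hεε₀ => ?_⟩
  have hnorm : ‖∑ j, exchangeWeights lam ℓ ℓ' ε j • g j‖ ^ 2 =
      ‖G‖ ^ 2 + ε * (ε * ‖g ℓ' - g ℓ‖ ^ 2 + 2 * γ) := by
    rw [sum_exchangeWeights_smul hne, ← hG, norm_add_smul_sq, hγdef]
  refine ⟨exchangeWeights_nonneg hpos hε.le ((hεε₀.trans_le (min_le_left _ _)).le),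
    (sum_exchangeWeights hne lam ε).trans hsum, hnorm, hnorm.trans_lt ?_⟩
  linarith [hdescent ε hε (hεε₀.trans_le (min_le_right _ _))]
end
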